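/- arXiv:1303.2536 — 2 statements merged into one kernel-verified Lean document; each statement's English description precedes it below -/
import Mathlib

section
/- Let n ≥ 1, m ≥ 0 and 𝔞 ∈ A_n(m). Then ω(τ𝔞) = τ(ω(𝔞)), where τ acts on tuples of the appropriate length by reversal. -/
/- Common definitions following K. O'Hara's spread/degree and the signature
   refinement; elements of A_n(m) are lists of naturals of length n+1 and sum m. -/

namespace OHara

/-- The spread of `a = (a_0, …, a_n)`: the maximum of `a_i + a_{i+1}` over `0 ≤ i ≤ n-1`
(`0` if the list has length ≤ 1). -/
def sprL (a : List ℕ) : ℕ :=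
  (Finset.range (a.length - 1)).sup (fun i => a.getD i 0 + a.getD (i + 1) 0)

/-- `M(a)`: the set of left indices of maximal pairs. -/
def Mset (a : List ℕ) : Finset ℕ :=
  (Finset.range (a.length - 1)).filter (fun i => a.getD i 0 + a.getD (i + 1) 0 = sprL a)

/-- The connected component (maximal interval of consecutive integers) of `i` inside `S`. -/
def compF (S : Finset ℕ) (i : ℕ) : Finset ℕ :=
  S.filter (fun j => Finset.Icc (min i j) (max i j) ⊆ S)

/-- The left endpoints of the maximal intervals of consecutive integers of `S`. -/
def leftEnds (S : Finset ℕ) : Finset ℕ :=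
  S.filter (fun i => i = 0 ∨ (i - 1) ∉ S)

/-- O'Hara's degree: the sum over the maximal intervals `D` of `M(a)` of `⌈|D|/2⌉`. -/
def ecdL (a : List ℕ) : ℕ :=
  ∑ i ∈ leftEnds (Mset a), ((compF (Mset a) i).card + 1) / 2

/-- The set of active indices `Act(a) = M(a) ∪ (1 + M(a))`. -/
def ActF (a : List ℕ) : Finset ℕ :=
  Mset a ∪ (Mset a).image (· + 1)

/-- An index `j` survives in `ω(a)` iff it is not active, or it is the left endpoint `c` of a
maximal interval `D = [c, c+d]` of `M(a)` with `d` odd (i.e. `|D|` even). -/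
def survivesB (a : List ℕ) (j : ℕ) : Bool :=
  decide (j ∉ ActF a ∨ (j ∈ leftEnds (Mset a) ∧ Even (compF (Mset a) j).card))

/-- `ω(a)`: the result of removing from `a` the largest possible number of maximal pairs. -/
def omegaL (a : List ℕ) : List ℕ :=
  ((List.range a.length).filter (fun j => survivesB a j)).map (fun j => a.getD j 0)

/-- Fuel-driven recursion computing the signature (the fuel `a.length` in `sigmaL`
always suffices, since `ω` shortens a list of length ≥ 3 by at least 2). -/
def sigmaAux : ℕ → List ℕ → List ℕ
  | _, [] => []
  | 0, a => [a.sum]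
  | fuel + 1, a =>
    if a.length ≤ 2 then [a.sum]
    else List.replicate (ecdL a - 1) 0 ++ [sprL a - sprL (omegaL a)] ++ sigmaAux fuel (omegaL a)

/-- The signature `σ(a)`. -/
def sigmaL (a : List ℕ) : List ℕ := sigmaAux a.length a

/-- `m = Σ_{j=0}^k (j+1)·d_j` determined by a signature `(d_0, …, d_k)`. -/
def mOf (ds : List ℕ) : ℕ := ∑ j ∈ Finset.range ds.length, (j + 1) * ds.getD j 0

/-- `Q_n(d_0, …, d_k)`: the set of elements of `A_n(m)` of signature `(d_0, …, d_k)`. -/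
def Qset (n : ℕ) (ds : List ℕ) : Set (List ℕ) :=
  {a | a.length = n + 1 ∧ a.sum = mOf ds ∧ sigmaL a = ds}

/-- The rank `rk(a) = Σ i·a_i`. -/
def rkL (a : List ℕ) : ℕ := ∑ i ∈ Finset.range a.length, i * a.getD i 0

/-- `b` covers `a` in `A_n(m)`: `b` is obtained from `a` by replacing some consecutive pair
`(a_i, a_{i+1})` by `(a_i - 1, a_{i+1} + 1)`. -/
def coversL (b a : List ℕ) : Prop :=
  ∃ i, i + 1 < a.length ∧ 0 < a.getD i 0 ∧
    b = (a.set i (a.getD i 0 - 1)).set (i + 1) (a.getD (i + 1) 0 + 1)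

/-- Normalization phase of the raising algorithm: starting at index `i ∈ M(a)`, repeatedly
replace `i` by `i - 1` as long as `i ≥ 1` and `a_{i+1} = a_{i-1}`. -/
def rnormIdx (a : List ℕ) : ℕ → ℕ
  | 0 => 0
  | i + 1 => if a.getD (i + 2) 0 = a.getD i 0 then rnormIdx a i else i + 1

/-- One move of the raising algorithm from `(a, i)` with `i ∈ M(a)`: after normalizing the
index, either halt (`none`, at an initial element) or perform one step. -/
def raiseMove (a : List ℕ) (i : ℕ) : Option (List ℕ × ℕ) :=
  let j := rnormIdx a i
  if a.getD (j + 1) 0 = 0 then none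
  else some ((a.set j (a.getD j 0 + 1)).set (j + 1) (a.getD (j + 1) 0 - 1), j)

/-- The list of elements produced by iterating the raising algorithm (including the start). -/
def raiseList : ℕ → List ℕ → ℕ → List (List ℕ)
  | 0, a, _ => [a]
  | fuel + 1, a, i =>
    match raiseMove a i with
    | none => [a]
    | some (a', j) => a :: raiseList fuel a' j

/-- Normalization phase of the lowering algorithm: starting at index `i ∈ M(a)`, repeatedly
replace `i` by `i + 1` as long as `i ≤ n - 2` and `a_i = a_{i+2}` (fuel-driven). -/
def lnormIdx (a : List ℕ) : ℕ → ℕ → ℕ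
  | 0, i => i
  | fuel + 1, i =>
    if i + 2 < a.length ∧ a.getD i 0 = a.getD (i + 2) 0 then lnormIdx a fuel (i + 1) else i

/-- One move of the lowering algorithm from `(a, i)` with `i ∈ M(a)`: after normalizing the
index, either halt (`none`, at a terminal element) or perform one step. -/
def lowerMove (a : List ℕ) (i : ℕ) : Option (List ℕ × ℕ) :=
  let j := lnormIdx a a.length i
  if a.getD j 0 = 0 then none
  else some ((a.set j (a.getD j 0 - 1)).set (j + 1) (a.getD (j + 1) 0 + 1), j)

/-- The list of elements produced by iterating the lowering algorithm (including the start). -/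
def lowerList : ℕ → List ℕ → ℕ → List (List ℕ)
  | 0, a, _ => [a]
  | fuel + 1, a, i =>
    match lowerMove a i with
    | none => [a]
    | some (a', j) => a :: lowerList fuel a' j

/-- The colors of the successive covering relations produced by the lowering algorithm:
a lowering step at index `j` replaces `(a_j, a_{j+1})` by `(a_j - 1, a_{j+1} + 1)` and has
color `j + 1`. -/
def lowerColors : ℕ → List ℕ → ℕ → List ℕ
  | 0, _, _ => []
  | fuel + 1, a, i =>
    match lowerMove a i with
    | none => []
    | some (a', j) => (j + 1) :: lowerColors fuel a' j

/-- The transversal chain `T_i(a)`: the elements obtained from `a` by the raising algorithm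
together with those obtained by the lowering algorithm, both started at index `i ∈ M(a)`.
(The fuels `rk(a)` and `a.length * a.sum` are always sufficient, since each raising move
decreases the rank by 1 and each lowering move increases it by 1, within `[0, n·m]`.) -/
def Tset (a : List ℕ) (i : ℕ) : Set (List ℕ) :=
  {x | x ∈ raiseList (rkL a) a i ∨ x ∈ lowerList (a.length * a.sum) a i}

end OHara

/-!
On a maximal interval `[c, r]` of `M(a)` every pair sum `a_i + a_{i+1}` equals the spread, so
the entries alternate: `a_c = a_{c+2} = ⋯`. When the interval has even length this gives
`a_c = a_{r+1}`, so `ω(a)` is unchanged if each such interval keeps its last entry `a_{r+1}`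
instead of its first entry `a_c`. Reversal reflects `M(a)` and swaps left and right ends of its
intervals, hence turns the first description of `ω` into the second.
-/

theorem Finset.sup_range_reflect {α : Type*} [SemilatticeSup α] [OrderBot α] (f : ℕ → α)
    (n : ℕ) : (Finset.range n).sup (fun j => f (n - 1 - j)) = (Finset.range n).sup f := by
  apply le_antisymm
  · exact Finset.sup_le fun j hj =>
      Finset.le_sup (f := f) (Finset.mem_range.2 (by have := Finset.mem_range.1 hj; omega))
  · refine Finset.sup_le fun j hj => ?_
    have hj := Finset.mem_range.1 hj
    rw [show f j = f (n - 1 - (n - 1 - j)) by congr 1; omega]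
    exact Finset.le_sup (f := fun j => f (n - 1 - j)) (Finset.mem_range.2 (by omega))

theorem List.filter_range_eq_map_filter_range {L : ℕ} {p q : ℕ → Bool} {f : ℕ → ℕ}
    (hmono : StrictMonoOn f {j | p j}) (hmaps : ∀ j < L, p j → f j < L ∧ q (f j))
    (hsurj : ∀ k < L, q k → ∃ j < L, p j ∧ f j = k) :
    (List.range L).filter q = ((List.range L).filter p).map f := by
  have hsorted : ∀ s : ℕ → Bool, ((List.range L).filter s).Pairwise (· < ·) := fun s =>
    (List.sortedLT_range L).pairwise.filter s
  have hsorted_map : (((List.range L).filter p).map f).Pairwise (· < ·) :=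
    List.pairwise_map.2 <| (hsorted p).imp_of_mem fun hj hj' h =>
      hmono (List.mem_filter.1 hj).2 (List.mem_filter.1 hj').2 h
  refine List.Perm.eq_of_pairwise' (hsorted q) hsorted_map <|
    List.perm_of_nodup_nodup_toFinset_eq (hsorted q).nodup hsorted_map.nodup ?_
  ext k
  simp only [List.mem_toFinset, List.mem_filter, List.mem_map, List.mem_range]
  constructor
  · rintro ⟨hk, hqk⟩
    obtain ⟨j, hj, hpj, rfl⟩ := hsurj k hk hqk
    exact ⟨j, ⟨hj, hpj⟩, rfl⟩
  · rintro ⟨j, ⟨hj, hpj⟩, rfl⟩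
    exact hmaps j hj hpj

theorem List.reverse_map_getD_filter_range {α : Type*} (a : List α) (d : α) (p : ℕ → Bool) :
    (((List.range a.length).filter p).map (a.getD · d)).reverse =
      ((List.range a.length).filter (fun j => p (a.length - 1 - j))).map (a.reverse.getD · d) := by
  rw [← List.map_reverse, ← List.filter_reverse, List.range_eq_range', List.reverse_range',
    List.filter_map, List.map_map, ← List.range_eq_range']
  simp only [Function.comp_def, zero_add]
  refine List.map_congr_left fun j hj => ?_
  have hj := List.mem_range.1 (List.mem_filter.1 hj).1
  rw [List.getD_reverse _ (by simpa using hj)]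

theorem apply_add_two_mul_eq_of_add_succ_eq {M : Type*} [AddCancelCommMonoid M] (f : ℕ → M)
    (s : M) (c : ℕ) :
    ∀ d, (∀ i, c ≤ i → i < c + 2 * d → f i + f (i + 1) = s) → f (c + 2 * d) = f c
  | 0, _ => rfl
  | d + 1, h => by
    have h₁ := h (c + 2 * d) (by omega) (by omega)
    have h₂ := h (c + 2 * d + 1) (by omega) (by omega)
    rw [show c + 2 * (d + 1) = c + 2 * d + 1 + 1 by ring,
      ← apply_add_two_mul_eq_of_add_succ_eq f s c d fun i hi hi' => h i hi (by omega)]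
    exact add_left_cancel (h₂.trans (h₁.symm.trans (add_comm _ _)))

namespace OHara

open Finset

section Components

variable {S : Finset ℕ} {j k c r : ℕ}

def rightEnds (S : Finset ℕ) : Finset ℕ := S.filter (fun i => i + 1 ∉ S)

theorem mem_leftEnds : j ∈ leftEnds S ↔ j ∈ S ∧ (j = 0 ∨ j - 1 ∉ S) := mem_filter

theorem mem_rightEnds : j ∈ rightEnds S ↔ j ∈ S ∧ j + 1 ∉ S := mem_filter

theorem mem_compF : k ∈ compF S j ↔ ∀ t, min j k ≤ t → t ≤ max j k → t ∈ S := by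
  simp only [compF, mem_filter, subset_iff, mem_Icc]
  exact ⟨fun h t ht ht' => h.2 ⟨ht, ht'⟩,
    fun h => ⟨h k (min_le_right _ _) (le_max_right _ _), fun t ht => h t ht.1 ht.2⟩⟩

theorem compF_subset : compF S j ⊆ S := filter_subset _ _

theorem self_mem_compF (hj : j ∈ S) : j ∈ compF S j :=
  mem_compF.2 fun t ht ht' => by rwa [show t = j by omega]

theorem compF_eq_of_mem (hk : k ∈ compF S j) : compF S k = compF S j := by
  have hk := mem_compF.1 hk
  ext x
  simp only [mem_compF]
  constructor
  · intro hx t ht ht'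
    rcases (by omega : (min j k ≤ t ∧ t ≤ max j k) ∨ (min k x ≤ t ∧ t ≤ max k x)) with
      h | h
    exacts [hk t h.1 h.2, hx t h.1 h.2]
  · intro hx t ht ht'
    rcases (by omega : (min j k ≤ t ∧ t ≤ max j k) ∨ (min j x ≤ t ∧ t ≤ max j x)) with
      h | h
    exacts [hk t h.1 h.2, hx t h.1 h.2]

theorem exists_compF_eq_Icc (hj : j ∈ S) :
    ∃ c r, compF S j = Icc c r ∧ c ∈ leftEnds S ∧ r ∈ rightEnds S := by
  set C := compF S j
  have hjC : j ∈ C := self_mem_compF hj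
  have hne : C.Nonempty := ⟨j, hjC⟩
  have hc := mem_compF.1 (C.min'_mem hne)
  have hr := mem_compF.1 (C.max'_mem hne)
  have hcj := C.min'_le j hjC
  have hjr := C.le_max' j hjC
  refine ⟨C.min' hne, C.max' hne, ?_, mem_leftEnds.2 ⟨hc _ (by omega) (by omega), ?_⟩,
    mem_rightEnds.2 ⟨hr _ (by omega) (by omega), fun hmem => ?_⟩⟩
  · ext t
    rw [mem_Icc]
    refine ⟨fun ht => ⟨C.min'_le t ht, C.le_max' t ht⟩, fun ⟨ht, ht'⟩ => mem_compF.2 ?_⟩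
    intro u hu hu'
    rcases le_total u j with h | h
    exacts [hc u (by omega) (by omega), hr u (by omega) (by omega)]
  · by_contra! h
    have : C.min' hne - 1 ∈ C := mem_compF.2 fun u hu hu' => by
      rcases (by omega : u = C.min' hne - 1 ∨ C.min' hne ≤ u) with rfl | h'
      exacts [h.2, hc u (by omega) (by omega)]
    have := C.min'_le _ this
    omega
  · have : C.max' hne + 1 ∈ C := mem_compF.2 fun u hu hu' => by
      rcases (by omega : u = C.max' hne + 1 ∨ u ≤ C.max' hne) with rfl | h'
      exacts [hmem, hr u (by omega) (by omega)]
    have := C.le_max' _ this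
    omega

theorem exists_compF_eq_Icc_of_mem_leftEnds (hc : c ∈ leftEnds S) :
    ∃ r, c ≤ r ∧ r ∈ rightEnds S ∧ compF S c = Icc c r ∧ compF S r = Icc c r := by
  obtain ⟨c', r, h, -, hr⟩ := exists_compF_eq_Icc (mem_leftEnds.1 hc).1
  have hcc := mem_Icc.1 (h ▸ self_mem_compF (mem_leftEnds.1 hc).1)
  obtain rfl : c' = c := by
    by_contra hne
    have : c - 1 ∈ S := compF_subset (h ▸ mem_Icc.2 ⟨by omega, by omega⟩)
    rcases (mem_leftEnds.1 hc).2 with h0 | h0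
    exacts [by omega, h0 this]
  exact ⟨r, hcc.2, hr, h, (compF_eq_of_mem (h ▸ mem_Icc.2 ⟨hcc.2, le_rfl⟩)).trans h⟩

theorem exists_compF_eq_Icc_of_mem_rightEnds (hr : r ∈ rightEnds S) :
    ∃ c, c ≤ r ∧ c ∈ leftEnds S ∧ compF S c = Icc c r ∧ compF S r = Icc c r := by
  obtain ⟨c, r', h, hc, -⟩ := exists_compF_eq_Icc (mem_rightEnds.1 hr).1
  have hrr := mem_Icc.1 (h ▸ self_mem_compF (mem_rightEnds.1 hr).1)
  obtain rfl : r' = r := by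
    by_contra hne
    exact (mem_rightEnds.1 hr).2 (compF_subset (h ▸ mem_Icc.2 ⟨by omega, by omega⟩))
  exact ⟨c, hrr.1, hc, (compF_eq_of_mem (h ▸ mem_Icc.2 ⟨le_rfl, hrr.1⟩)).trans h, h⟩

end Components

section Reflection

variable {n : ℕ} {S : Finset ℕ} {i j : ℕ}

def reflS (n : ℕ) (S : Finset ℕ) : Finset ℕ := (range n).filter (fun i => n - 1 - i ∈ S)

theorem mem_reflS : i ∈ reflS n S ↔ i < n ∧ n - 1 - i ∈ S := by
  simp [reflS]

theorem card_reflS (hS : S ⊆ range n) : (reflS n S).card = S.card := by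
  refine card_nbij' (n - 1 - ·) (n - 1 - ·) ?_ ?_ ?_ ?_
  · exact fun i hi => (mem_reflS.1 hi).2
  · intro i hi
    have := mem_range.1 (hS hi)
    dsimp only
    exact mem_reflS.2 ⟨by omega, by rwa [show n - 1 - (n - 1 - i) = i by omega]⟩
  · intro i hi
    have := (mem_reflS.1 hi).1
    dsimp only
    omega
  · intro i hi
    have := mem_range.1 (hS hi)
    dsimp only
    omega

theorem compF_reflS (hj : j < n) : compF (reflS n S) j = reflS n (compF S (n - 1 - j)) := by
  ext k
  simp only [mem_reflS, mem_compF]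
  constructor
  · intro h
    refine ⟨(h k (min_le_right _ _) (le_max_right _ _)).1, fun t ht ht' => ?_⟩
    have := (h (n - 1 - t) (by omega) (by omega)).2
    rwa [show n - 1 - (n - 1 - t) = t by omega] at this
  · rintro ⟨hk, h⟩ t ht ht'
    exact ⟨by omega, h _ (by omega) (by omega)⟩

theorem mem_leftEnds_reflS (hS : S ⊆ range n) :
    j ∈ leftEnds (reflS n S) ↔ j < n ∧ n - 1 - j ∈ rightEnds S := by
  simp only [mem_leftEnds, mem_rightEnds, mem_reflS]
  constructor
  · rintro ⟨⟨hj, hjS⟩, h⟩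
    refine ⟨hj, hjS, fun hmem => ?_⟩
    have := mem_range.1 (hS hmem)
    rcases h with h | h
    · omega
    · exact h ⟨by omega, by rwa [show n - 1 - (j - 1) = n - 1 - j + 1 by omega]⟩
  · rintro ⟨hj, hjS, h⟩
    refine ⟨⟨hj, hjS⟩, or_iff_not_imp_left.2 fun hj0 hmem => h ?_⟩
    rw [show n - 1 - j + 1 = n - 1 - (j - 1) by omega]
    exact hmem.2

end Reflection

section Reversal

variable {a : List ℕ} {i j : ℕ}

theorem mem_Mset :
    i ∈ Mset a ↔ i < a.length - 1 ∧ a.getD i 0 + a.getD (i + 1) 0 = sprL a := by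
  simp [Mset]

theorem Mset_subset_range (a : List ℕ) : Mset a ⊆ range (a.length - 1) := filter_subset _ _

theorem mem_ActF : j ∈ ActF a ↔ j ∈ Mset a ∨ ∃ i ∈ Mset a, i + 1 = j := by
  simp [ActF]

theorem getD_reverse_add_getD_reverse (hi : i < a.length - 1) :
    a.reverse.getD i 0 + a.reverse.getD (i + 1) 0 =
      a.getD (a.length - 1 - 1 - i) 0 + a.getD (a.length - 1 - 1 - i + 1) 0 := by
  rw [List.getD_reverse _ (by omega), List.getD_reverse _ (by omega), add_comm]
  congr 2 <;> omega

theorem sprL_reverse (a : List ℕ) : sprL a.reverse = sprL a := by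
  rw [sprL, sprL, List.length_reverse,
    ← Finset.sup_range_reflect (fun i => a.getD i 0 + a.getD (i + 1) 0)]
  exact sup_congr rfl fun i hi => getD_reverse_add_getD_reverse (mem_range.1 hi)

theorem Mset_reverse (a : List ℕ) : Mset a.reverse = reflS (a.length - 1) (Mset a) := by
  ext i
  simp only [mem_reflS, mem_Mset, List.length_reverse, sprL_reverse]
  constructor
  · rintro ⟨hi, h⟩
    exact ⟨hi, by omega, by rwa [← getD_reverse_add_getD_reverse hi]⟩
  · rintro ⟨hi, -, h⟩
    exact ⟨hi, by rwa [getD_reverse_add_getD_reverse hi]⟩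

theorem mem_ActF_reverse (hj : j < a.length) :
    j ∈ ActF a.reverse ↔ a.length - 1 - j ∈ ActF a := by
  have hM := Mset_subset_range a
  simp only [mem_ActF, Mset_reverse, mem_reflS]
  constructor
  · rintro (⟨hj', h⟩ | ⟨i, ⟨hi, h⟩, rfl⟩)
    · exact Or.inr ⟨_, h, by omega⟩
    · exact Or.inl (by convert h using 1; omega)
  · rintro (h | ⟨i, hi, h⟩)
    · have := mem_range.1 (hM h)
      exact Or.inr ⟨j - 1, ⟨by omega, by convert h using 1; omega⟩, by omega⟩
    · have := mem_range.1 (hM hi)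
      exact Or.inl ⟨by omega, by convert hi using 1; omega⟩

def survivesRightB (a : List ℕ) (k : ℕ) : Bool :=
  decide (k ∉ ActF a ∨ ∃ r ∈ rightEnds (Mset a), r + 1 = k ∧ Even (compF (Mset a) r).card)

theorem survivesB_reverse (hj : j < a.length) :
    survivesB a.reverse j = survivesRightB a (a.length - 1 - j) := by
  have hM := Mset_subset_range a
  simp only [survivesB, survivesRightB, decide_eq_decide, mem_ActF_reverse hj, Mset_reverse,
    mem_leftEnds_reflS hM]
  refine or_congr Iff.rfl ⟨fun ⟨⟨hj', hr⟩, he⟩ => ⟨_, hr, by omega, ?_⟩, ?_⟩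
  · rwa [compF_reflS hj', card_reflS (compF_subset.trans hM)] at he
  · rintro ⟨r, hr, hrj, he⟩
    have := mem_range.1 (hM (mem_rightEnds.1 hr).1)
    have hr' : a.length - 1 - 1 - j = r := by omega
    refine ⟨⟨by omega, hr' ▸ hr⟩, ?_⟩
    rwa [compF_reflS (by omega), card_reflS (compF_subset.trans hM), hr']

end Reversal

section RightSurvivors

variable {a : List ℕ} {j j' k : ℕ}

def toRightSurvivor (a : List ℕ) (j : ℕ) : ℕ :=
  if j ∈ leftEnds (Mset a) ∧ Even (compF (Mset a) j).card then j + (compF (Mset a) j).card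
  else j

theorem survivesB_iff : survivesB a j ↔
    j ∉ ActF a ∨ (j ∈ leftEnds (Mset a) ∧ Even (compF (Mset a) j).card) := by
  simp [survivesB]

theorem le_toRightSurvivor : j ≤ toRightSurvivor a j := by
  unfold toRightSurvivor
  split_ifs <;> omega

theorem toRightSurvivor_of_notMem_ActF (hj : j ∉ ActF a) : toRightSurvivor a j = j :=
  if_neg fun h => hj (mem_ActF.2 (Or.inl (mem_leftEnds.1 h.1).1))

theorem toRightSurvivor_of_compF_eq_Icc {c r : ℕ} (hcr : c ≤ r) (hc : c ∈ leftEnds (Mset a))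
    (h : compF (Mset a) c = Icc c r) (he : Even (r + 1 - c)) : toRightSurvivor a c = r + 1 := by
  rw [toRightSurvivor, h, Nat.card_Icc, if_pos ⟨hc, he⟩]
  omega

theorem survivesB_cases (h : survivesB a j) :
    (j ∉ ActF a ∧ toRightSurvivor a j = j) ∨
      ∃ r, j ≤ r ∧ r ∈ rightEnds (Mset a) ∧ compF (Mset a) j = Icc j r ∧
        compF (Mset a) r = Icc j r ∧ Even (r + 1 - j) ∧ toRightSurvivor a j = r + 1 := by
  rcases survivesB_iff.1 h with hj | ⟨hj, he⟩
  · exact Or.inl ⟨hj, toRightSurvivor_of_notMem_ActF hj⟩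
  · obtain ⟨r, hjr, hr, hcomp, hcomp_r⟩ := exists_compF_eq_Icc_of_mem_leftEnds hj
    rw [hcomp, Nat.card_Icc] at he
    exact Or.inr
      ⟨r, hjr, hr, hcomp, hcomp_r, he, toRightSurvivor_of_compF_eq_Icc hjr hj hcomp he⟩

theorem getD_toRightSurvivor (h : survivesB a j) : a.getD (toRightSurvivor a j) 0 = a.getD j 0 := by
  rcases survivesB_cases h with ⟨-, hf⟩ | ⟨r, hjr, -, hcomp, -, ⟨d, hd⟩, hf⟩
  · rw [hf]
  · rw [hf, show r + 1 = j + 2 * d by omega]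
    refine apply_add_two_mul_eq_of_add_succ_eq (a.getD · 0) (sprL a) j d fun i hi hi' => ?_
    exact (mem_Mset.1 (compF_subset (hcomp ▸ mem_Icc.2 ⟨hi, by omega⟩))).2

theorem toRightSurvivor_lt (h : survivesB a j) (h' : survivesB a j') (hjj' : j < j') :
    toRightSurvivor a j < j' := by
  rcases survivesB_cases h with ⟨-, hf⟩ | ⟨r, -, -, hcomp, -, -, hf⟩
  · omega
  · rw [hf]
    by_contra! hj'
    -- then `j' - 1 ∈ [j, r] ⊆ M(a)`, so `j'` is active but not a left end
    have hM : j' - 1 ∈ Mset a := compF_subset (hcomp ▸ mem_Icc.2 ⟨by omega, by omega⟩)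
    rcases survivesB_iff.1 h' with hA | ⟨hl, -⟩
    · exact hA (mem_ActF.2 (Or.inr ⟨_, hM, by omega⟩))
    · rcases (mem_leftEnds.1 hl).2 with h0 | h0
      exacts [by omega, h0 hM]

theorem strictMonoOn_toRightSurvivor : StrictMonoOn (toRightSurvivor a) {j | survivesB a j} :=
  fun _ hj _ hj' hjj' => (toRightSurvivor_lt hj hj' hjj').trans_le le_toRightSurvivor

theorem survivesRightB_toRightSurvivor (h : survivesB a j) (hj : j < a.length) :
    toRightSurvivor a j < a.length ∧ survivesRightB a (toRightSurvivor a j) := by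
  rcases survivesB_cases h with ⟨hA, hf⟩ | ⟨r, -, hr, -, hcomp_r, he, hf⟩
  · rw [hf]
    exact ⟨hj, decide_eq_true (Or.inl hA)⟩
  · have := mem_range.1 (Mset_subset_range a (mem_rightEnds.1 hr).1)
    rw [hf]
    refine ⟨by omega, decide_eq_true (Or.inr ⟨r, hr, rfl, ?_⟩)⟩
    rwa [hcomp_r, Nat.card_Icc]

theorem exists_toRightSurvivor_eq (hk : survivesRightB a k) (hkL : k < a.length) :
    ∃ j < a.length, survivesB a j ∧ toRightSurvivor a j = k := by
  rcases of_decide_eq_true hk with hA | ⟨r, hr, rfl, he⟩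
  · exact ⟨k, hkL, decide_eq_true (Or.inl hA), toRightSurvivor_of_notMem_ActF hA⟩
  · obtain ⟨c, hcr, hc, hcomp_c, hcomp⟩ := exists_compF_eq_Icc_of_mem_rightEnds hr
    rw [hcomp, Nat.card_Icc] at he
    exact ⟨c, by omega, decide_eq_true (Or.inr ⟨hc, by rwa [hcomp_c, Nat.card_Icc]⟩),
      toRightSurvivor_of_compF_eq_Icc hcr hc hcomp_c he⟩

theorem omegaL_eq_map_filter_survivesRightB (a : List ℕ) :
    omegaL a = ((List.range a.length).filter (survivesRightB a)).map (a.getD · 0) := by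
  rw [List.filter_range_eq_map_filter_range strictMonoOn_toRightSurvivor
    (fun _ hj h => survivesRightB_toRightSurvivor h hj)
    (fun _ hk h => exists_toRightSurvivor_eq h hk), List.map_map, omegaL]
  exact List.map_congr_left fun j hj => (getD_toRightSurvivor (List.mem_filter.1 hj).2).symm

end RightSurvivors

end OHara

open OHara in
theorem omega_comm_tau_general (a : List ℕ) :
    omegaL a.reverse = (omegaL a).reverse := by
  rw [omegaL_eq_map_filter_survivesRightB a, List.reverse_map_getD_filter_range, omegaL,
    List.length_reverse]
  congr 1
  exact List.filter_congr fun j hj => survivesB_reverse (List.mem_range.1 hj)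

open OHara in
/-- `ω` commutes with the reversal involution `τ`: `ω(τ𝔞) = τ(ω(𝔞))`. -/
theorem omega_comm_tau (n m : ℕ) (hn : 1 ≤ n)
    (a : List ℕ) (hlen : a.length = n + 1) (hsum : a.sum = m) :
    omegaL a.reverse = (omegaL a).reverse :=
  omega_comm_tau_general a
end

section
/- Let n ≥ 1, m ≥ 1, and let 𝔞 = (a_0, 0, a_2, …, a_n) ∈ A_n(m) be an initial element (so a_1 = 0 and a_0 = spr(𝔞)). Then: (i) the color sequence of the transversal chain T_0(𝔞) is (1^{a_0−a_2}, 2^{a_0−a_2−a_3}, …, j^{a_0−a_j−a_{j+1}}, …, n^{a_0−a_n}), i.e. color j occurs with multiplicity a_0 − a_j − a_{j+1} for 1 ≤ j ≤ n (with the conventions a_1 = 0 and a_{n+1} = 0), and the colors occur in nondecreasing order; (ii) the terminal element of T_0(𝔞) is 𝔟 = (a_2, …, a_n, 0, a_0); (iii) T_0(𝔞) = T_{n−1}(𝔟). -/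
/-!
Put `A i = a_i`. For `1 ≤ t ≤ n` and `a_{t+1} ≤ x ≤ a_0 - a_t` the list
`chainElem A n t x = (a_2, …, a_t, x, a_0 - x, a_{t+1}, …, a_n)` is an element of `A_n(m)`; the
initial element is `chainElem A n 1 a_0` and `𝔟 = chainElem A n n 0`. Lowering at index `t - 1`
turns `x` into `x - 1` (a step of color `t`) as long as `x > a_{t+1}`. When `x = a_{t+1}`, the
entries at `t - 1` and `t + 1` agree, so the index moves on to `t`, and the element is
`chainElem A n (t + 1) (a_0 - a_{t+1})`. Hence color `t` occurs `a_0 - a_t - a_{t+1}` times and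
the run ends at `𝔟`. Raising from `𝔟` at index `n - 1` walks back through the same elements, so
both transversal chains are the set of all `chainElem A n t x`.
-/

namespace OHara

lemma getD_le_sum (l : List ℕ) (i : ℕ) : l.getD i 0 ≤ l.sum := by
  rcases Nat.lt_or_ge i l.length with h | h
  · rw [List.getD_eq_getElem _ _ h]
    exact List.le_sum_of_mem (List.getElem_mem h)
  · rw [List.getD_eq_default _ _ h]
    exact Nat.zero_le _

lemma mul_getD_le_rkL (l : List ℕ) (i : ℕ) : i * l.getD i 0 ≤ rkL l := by
  rcases Nat.lt_or_ge i l.length with h | h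
  · exact Finset.single_le_sum (f := fun i => i * l.getD i 0) (fun _ _ => Nat.zero_le _)
      (Finset.mem_range.2 h)
  · rw [List.getD_eq_default _ _ h, Nat.mul_zero]
    exact Nat.zero_le _

lemma add_getD_le_sprL {a : List ℕ} {s : ℕ} (hs : s + 1 < a.length) :
    a.getD s 0 + a.getD (s + 1) 0 ≤ sprL a :=
  Finset.le_sup (f := fun i => a.getD i 0 + a.getD (i + 1) 0) (Finset.mem_range.2 (by omega))

lemma getD_add_getD_succ_le_of_eq_sprL {a : List ℕ} (ha : 2 ≤ a.length)
    (h0 : a.getD 0 0 = sprL a) (s : ℕ) : a.getD s 0 + a.getD (s + 1) 0 ≤ a.getD 0 0 := by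
  rw [h0]
  rcases Nat.lt_or_ge (s + 1) a.length with hs | hs
  · exact add_getD_le_sprL hs
  rw [List.getD_eq_default _ _ (by omega : a.length ≤ s + 1)]
  rcases Nat.lt_or_ge s a.length with hs' | hs'
  · have := add_getD_le_sprL (a := a) (s := s - 1) (by omega)
    rw [Nat.sub_add_cancel (by omega)] at this
    omega
  · rw [List.getD_eq_default _ _ hs']
    exact Nat.zero_le _

lemma length_flatMap_range_replicate_le {c : ℕ → ℕ} {C : ℕ} (hle : ∀ j, c j ≤ C) (N : ℕ) :
    ((List.range N).flatMap fun j => List.replicate (c j) (j + 1)).length ≤ N * C := by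
  rw [List.length_flatMap]
  refine (List.sum_le_card_nsmul _ C ?_).trans (by simp)
  simpa using fun j _ => hle j

lemma isChain_flatMap_range_replicate (N : ℕ) (c : ℕ → ℕ) :
    ((List.range N).flatMap fun j => List.replicate (c j) (j + 1)).IsChain (· ≤ ·) := by
  rw [List.isChain_iff_pairwise, List.pairwise_flatMap]
  refine ⟨fun j _ => List.pairwise_replicate.2 (.inr le_rfl), List.pairwise_lt_range.imp ?_⟩
  intro i j hij x hx y hy
  rw [(List.mem_replicate.1 hx).2, (List.mem_replicate.1 hy).2]
  omega

section Iteration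

variable {c c' : List ℕ} {i i' j fuel : ℕ}

lemma lnormIdx_eq_self (f : ℕ) (h : ¬ (i + 2 < c.length ∧ c.getD i 0 = c.getD (i + 2) 0)) :
    lnormIdx c f i = i := by
  cases f with
  | zero => rfl
  | succ f => rw [lnormIdx, if_neg h]

lemma lnormIdx_succ_of (f : ℕ) (h : i + 2 < c.length ∧ c.getD i 0 = c.getD (i + 2) 0) :
    lnormIdx c (f + 1) i = lnormIdx c f (i + 1) := by
  rw [lnormIdx, if_pos h]

lemma lnormIdx_congr_fuel (f f' i : ℕ) (hf : c.length ≤ i + 2 + f) (hf' : c.length ≤ i + 2 + f') :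
    lnormIdx c f i = lnormIdx c f' i := by
  induction f generalizing f' i with
  | zero => rw [lnormIdx_eq_self f' (by omega)]; rfl
  | succ f ih =>
    by_cases h : i + 2 < c.length ∧ c.getD i 0 = c.getD (i + 2) 0
    · obtain ⟨f', rfl⟩ : ∃ g, f' = g + 1 := ⟨f' - 1, by omega⟩
      rw [lnormIdx_succ_of _ h, lnormIdx_succ_of _ h, ih f' (i + 1) (by omega) (by omega)]
    · rw [lnormIdx_eq_self _ h, lnormIdx_eq_self _ h]

lemma lowerList_of_lowerMove_eq_none (fuel : ℕ) (h : lowerMove c i = none) :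
    lowerList fuel c i = [c] := by
  cases fuel <;> simp [lowerList, h]

lemma lowerColors_of_lowerMove_eq_none (fuel : ℕ) (h : lowerMove c i = none) :
    lowerColors fuel c i = [] := by
  cases fuel <;> simp [lowerColors, h]

lemma raiseList_of_raiseMove_eq_none (fuel : ℕ) (h : raiseMove c i = none) :
    raiseList fuel c i = [c] := by
  cases fuel <;> simp [raiseList, h]

lemma lowerList_succ_of_lowerMove_eq_some (h : lowerMove c i = some (c', j)) :
    lowerList (fuel + 1) c i = c :: lowerList fuel c' j := by
  simp [lowerList, h]

lemma lowerColors_succ_of_lowerMove_eq_some (h : lowerMove c i = some (c', j)) :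
    lowerColors (fuel + 1) c i = (j + 1) :: lowerColors fuel c' j := by
  simp [lowerColors, h]

lemma raiseList_succ_of_raiseMove_eq_some (h : raiseMove c i = some (c', j)) :
    raiseList (fuel + 1) c i = c :: raiseList fuel c' j := by
  simp [raiseList, h]

lemma lowerList_congr_index (fuel : ℕ) (h : lowerMove c i = lowerMove c i') :
    lowerList fuel c i = lowerList fuel c i' := by
  cases fuel <;> simp [lowerList, h]

lemma lowerColors_congr_index (fuel : ℕ) (h : lowerMove c i = lowerMove c i') :
    lowerColors fuel c i = lowerColors fuel c i' := by
  cases fuel <;> simp [lowerColors, h]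

lemma raiseList_congr_index (fuel : ℕ) (h : raiseMove c i = raiseMove c i') :
    raiseList fuel c i = raiseList fuel c i' := by
  cases fuel <;> simp [raiseList, h]

end Iteration

def chainEntry (A : ℕ → ℕ) (t x i : ℕ) : ℕ :=
  if i + 1 < t then A (i + 2) else if i + 1 = t then x else if i = t then A 0 - x else A i

def chainElem (A : ℕ → ℕ) (n t x : ℕ) : List ℕ := (List.range (n + 1)).map (chainEntry A t x)

section ChainElem

variable {A : ℕ → ℕ} {n t x : ℕ}

@[simp] lemma length_chainElem : (chainElem A n t x).length = n + 1 := by simp [chainElem]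

lemma getD_chainElem (i : ℕ) :
    (chainElem A n t x).getD i 0 = if i ≤ n then chainEntry A t x i else 0 := by
  split_ifs with h
  · simp [chainElem, List.getD_eq_getElem?_getD, show i < n + 1 by omega]
  · exact List.getD_eq_default _ _ (by simp; omega)

lemma getD_chainElem_sub_one (ht : 1 ≤ t) (htn : t ≤ n) :
    (chainElem A n t x).getD (t - 1) 0 = x := by
  rw [getD_chainElem, if_pos (by omega), chainEntry, if_neg (by omega), if_pos (by omega)]

lemma getD_chainElem_self (htn : t ≤ n) :
    (chainElem A n t x).getD t 0 = A 0 - x := by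
  rw [getD_chainElem, if_pos htn, chainEntry, if_neg (by omega), if_neg (by omega), if_pos rfl]

lemma getD_chainElem_succ (htop : ∀ i, n < i → A i = 0) :
    (chainElem A n t x).getD (t + 1) 0 = A (t + 1) := by
  rw [getD_chainElem]
  split_ifs with h
  · rw [chainEntry, if_neg (by omega), if_neg (by omega), if_neg (by omega)]
  · exact (htop _ (by omega)).symm

lemma getD_chainElem_sub_two (ht : 2 ≤ t) (htn : t ≤ n) :
    (chainElem A n t x).getD (t - 2) 0 = A t := by
  rw [getD_chainElem, if_pos (by omega), chainEntry, if_pos (by omega),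
    show t - 2 + 2 = t by omega]

lemma set_set_chainElem (ht : 1 ≤ t) (y : ℕ) :
    ((chainElem A n t x).set (t - 1) y).set t (A 0 - y) = chainElem A n t y := by
  refine List.ext_getElem (by simp) fun i h₁ h₂ => ?_
  simp only [chainElem, List.getElem_set, List.getElem_map, List.getElem_range, chainEntry]
  split_ifs <;> omega

lemma chainElem_boundary (hA : A (t + 1) ≤ A 0) :
    chainElem A n t (A (t + 1)) = chainElem A n (t + 1) (A 0 - A (t + 1)) := by
  refine List.map_congr_left fun i _ => ?_
  simp only [chainEntry]
  split_ifs <;> first | omega | (congr 1; omega) | (subst_vars; omega)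

lemma eq_chainElem_of_getD {l : List ℕ} (hl : l.length = n + 1)
    (h : ∀ i ≤ n, l.getD i 0 = chainEntry A t x i) : l = chainElem A n t x :=
  List.ext_getElem (by simp [hl]) fun i h₁ _ => by
    rw [← List.getD_eq_getElem l 0 h₁, h i (by omega)]
    simp [chainElem]

lemma chainEntry_initial (hA1 : A 1 = 0) (i : ℕ) : chainEntry A 1 (A 0) i = A i := by
  rcases i with _ | _ | i <;> simp [chainEntry, hA1]

lemma eq_chainElem_initial {a : List ℕ} (hlen : a.length = n + 1) (h1 : a.getD 1 0 = 0) :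
    a = chainElem (fun i => a.getD i 0) n 1 (a.getD 0 0) :=
  eq_chainElem_of_getD hlen fun i _ => (chainEntry_initial (A := fun i => a.getD i 0) h1 i).symm

lemma drop_two_append_eq_chainElem {a : List ℕ} (hlen : a.length = n + 1) (hn : 1 ≤ n) :
    a.drop 2 ++ [0, a.getD 0 0] = chainElem (fun i => a.getD i 0) n n 0 := by
  refine eq_chainElem_of_getD (by simp; omega) fun i hi => ?_
  rcases Nat.lt_trichotomy (i + 1) n with h | h | h
  · rw [List.getD_append _ _ _ _ (by simp; omega)]
    simp [chainEntry, h, List.getD_eq_getElem?_getD, add_comm]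
  · rw [List.getD_append_right _ _ _ _ (by simp; omega)]
    simp [chainEntry, List.getD_eq_getElem?_getD, hlen, show i - (n - 1) = 0 by omega, h]
  · obtain rfl : i = n := by omega
    rw [List.getD_append_right _ _ _ _ (by simp; omega)]
    simp [chainEntry, List.getD_eq_getElem?_getD, hlen, show i - (i - 1) = 1 by omega]

end ChainElem

section Moves

variable {A : ℕ → ℕ} {n t x : ℕ}

lemma lowerMove_chainElem_of_lt (ht : 1 ≤ t) (htn : t ≤ n) (htop : ∀ i, n < i → A i = 0)
    (hx : A (t + 1) < x) (hxA : x ≤ A 0) :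
    lowerMove (chainElem A n t x) (t - 1) = some (chainElem A n t (x - 1), t - 1) := by
  have hidx : lnormIdx (chainElem A n t x) (n + 1) (t - 1) = t - 1 := by
    refine lnormIdx_eq_self _ fun ⟨_, heq⟩ => ?_
    rw [show t - 1 + 2 = t + 1 by omega, getD_chainElem_sub_one ht htn,
      getD_chainElem_succ htop] at heq
    omega
  simp only [lowerMove, length_chainElem, hidx, getD_chainElem_sub_one ht htn,
    show t - 1 + 1 = t by omega, getD_chainElem_self htn, if_neg (show x ≠ 0 by omega),
    show A 0 - x + 1 = A 0 - (x - 1) by omega, set_set_chainElem ht]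

lemma lowerMove_chainElem_boundary (ht : 1 ≤ t) (htn : t < n) (htop : ∀ i, n < i → A i = 0) :
    lowerMove (chainElem A n t (A (t + 1))) (t - 1) =
      lowerMove (chainElem A n t (A (t + 1))) t := by
  have hc : (chainElem A n t (A (t + 1))).length = n + 1 := length_chainElem
  have hstep : t - 1 + 2 < (chainElem A n t (A (t + 1))).length ∧
      (chainElem A n t (A (t + 1))).getD (t - 1) 0 =
        (chainElem A n t (A (t + 1))).getD (t - 1 + 2) 0 := by
    rw [hc, show t - 1 + 2 = t + 1 by omega, getD_chainElem_sub_one ht htn.le,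
      getD_chainElem_succ htop]
    exact ⟨by omega, rfl⟩
  have hidx : lnormIdx (chainElem A n t (A (t + 1))) (n + 1) (t - 1) =
      lnormIdx (chainElem A n t (A (t + 1))) (n + 1) t := by
    rw [lnormIdx_succ_of n hstep, show t - 1 + 1 = t by omega,
      lnormIdx_congr_fuel n (n + 1) t (by omega) (by omega)]
  simp only [lowerMove, hc, hidx]

lemma lowerMove_chainElem_last (hn : 1 ≤ n) : lowerMove (chainElem A n n 0) (n - 1) = none := by
  have hidx : lnormIdx (chainElem A n n 0) (n + 1) (n - 1) = n - 1 :=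
    lnormIdx_eq_self _ fun ⟨h, _⟩ => by simp at h; omega
  simp only [lowerMove, length_chainElem, hidx, getD_chainElem_sub_one hn le_rfl, ↓reduceIte]

lemma raiseMove_chainElem_of_lt (ht : 1 ≤ t) (htn : t ≤ n) (hx : x < A 0 - A t) :
    raiseMove (chainElem A n t x) (t - 1) = some (chainElem A n t (x + 1), t - 1) := by
  have hidx : rnormIdx (chainElem A n t x) (t - 1) = t - 1 := by
    rcases Nat.lt_or_ge t 2 with h | h
    · obtain rfl : t = 1 := by omega
      rfl
    · obtain ⟨u, rfl⟩ : ∃ u, t = u + 2 := ⟨t - 2, by omega⟩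
      have h₂ := getD_chainElem_sub_two (A := A) (x := x) h htn
      rw [Nat.add_sub_cancel] at h₂
      rw [show u + 2 - 1 = u + 1 by omega, rnormIdx, getD_chainElem_self htn, h₂,
        if_neg (by omega)]
  simp only [raiseMove, hidx, show t - 1 + 1 = t by omega, getD_chainElem_self htn,
    getD_chainElem_sub_one ht htn, if_neg (show A 0 - x ≠ 0 by omega),
    show A 0 - x - 1 = A 0 - (x + 1) by omega, set_set_chainElem ht]

lemma raiseMove_chainElem_boundary (ht : 2 ≤ t) (htn : t ≤ n) (hA : A t ≤ A 0) :
    raiseMove (chainElem A n t (A 0 - A t)) (t - 1) =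
      raiseMove (chainElem A n t (A 0 - A t)) (t - 2) := by
  obtain ⟨u, rfl⟩ : ∃ u, t = u + 2 := ⟨t - 2, by omega⟩
  have h₁ := getD_chainElem_self (A := A) (x := A 0 - A (u + 2)) htn
  have h₂ := getD_chainElem_sub_two (A := A) (x := A 0 - A (u + 2)) ht htn
  simp only [Nat.add_sub_cancel] at h₂
  simp only [raiseMove, show u + 2 - 1 = u + 1 by omega, Nat.add_sub_cancel, rnormIdx, h₁, h₂,
    if_pos (show A 0 - (A 0 - A (u + 2)) = A (u + 2) by omega)]

lemma raiseMove_chainElem_first (hn : 1 ≤ n) : raiseMove (chainElem A n 1 (A 0)) 0 = none := by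
  simp only [raiseMove, rnormIdx, Nat.zero_add, getD_chainElem_self (A := A) (x := A 0) hn,
    Nat.sub_self, ↓reduceIte]

end Moves

def lowerColorSeq (A : ℕ → ℕ) (n t x : ℕ) : List ℕ :=
  List.replicate (x - A (t + 1)) t ++
    (List.range' t (n - t)).flatMap fun j => List.replicate (A 0 - A (j + 1) - A (j + 2)) (j + 1)

section ColorSeq

variable {A : ℕ → ℕ} {n t x : ℕ}

lemma lowerColorSeq_of_lt (h : A (t + 1) < x) :
    lowerColorSeq A n t x = t :: lowerColorSeq A n t (x - 1) := by
  rw [lowerColorSeq, lowerColorSeq, show x - A (t + 1) = x - 1 - A (t + 1) + 1 by omega,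
    List.replicate_succ, List.cons_append]

lemma lowerColorSeq_boundary (ht : t < n) :
    lowerColorSeq A n t (A (t + 1)) = lowerColorSeq A n (t + 1) (A 0 - A (t + 1)) := by
  rw [lowerColorSeq, lowerColorSeq, show n - t = n - (t + 1) + 1 by omega, List.range'_succ,
    List.flatMap_cons, Nat.sub_self, List.replicate_zero, List.nil_append]

lemma lowerColorSeq_initial (hn : 1 ≤ n) (hA1 : A 1 = 0) :
    lowerColorSeq A n 1 (A 0) =
      (List.range n).flatMap fun j => List.replicate (A 0 - A (j + 1) - A (j + 2)) (j + 1) := by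
  obtain ⟨k, rfl⟩ : ∃ k, n = k + 1 := ⟨n - 1, by omega⟩
  rw [lowerColorSeq, List.range_eq_range', List.range'_succ, List.flatMap_cons, hA1]
  rfl

lemma length_lowerColorSeq_initial_le (hn : 1 ≤ n) (hA1 : A 1 = 0) :
    (lowerColorSeq A n 1 (A 0)).length ≤ n * A 0 := by
  rw [lowerColorSeq_initial hn hA1]
  exact length_flatMap_range_replicate_le (fun _ => (Nat.sub_le _ _).trans (Nat.sub_le _ _)) n

end ColorSeq

def chainPos (A : ℕ → ℕ) (n : ℕ) : Set (ℕ × ℕ) :=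
  {p | 1 ≤ p.1 ∧ p.1 ≤ n ∧ A (p.1 + 1) ≤ p.2 ∧ p.2 ≤ A 0 - A p.1}

@[simp] lemma mem_chainPos {A : ℕ → ℕ} {n t x : ℕ} :
    (t, x) ∈ chainPos A n ↔ 1 ≤ t ∧ t ≤ n ∧ A (t + 1) ≤ x ∧ x ≤ A 0 - A t :=
  Iff.rfl

def chainPosAfter (A : ℕ → ℕ) (n t x : ℕ) : Set (ℕ × ℕ) :=
  {q ∈ chainPos A n | t < q.1 ∨ q.1 = t ∧ q.2 ≤ x}

def chainPosBefore (A : ℕ → ℕ) (n t x : ℕ) : Set (ℕ × ℕ) :=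
  {q ∈ chainPos A n | q.1 < t ∨ q.1 = t ∧ x ≤ q.2}

section Positions

variable {A : ℕ → ℕ} {n t x : ℕ}

lemma chainPosAfter_last (htop : ∀ i, n < i → A i = 0) (hspr : ∀ s, A s + A (s + 1) ≤ A 0)
    (hn : 1 ≤ n) : chainPosAfter A n n 0 = {(n, 0)} := by
  ext ⟨s, y⟩
  simp only [chainPosAfter, Set.mem_ofPred_eq, mem_chainPos, Set.mem_singleton_iff, Prod.mk.injEq]
  have := htop (n + 1) (by omega)
  have := hspr n
  grind

lemma chainPosAfter_of_lt (htx : (t, x) ∈ chainPos A n) (hx : 0 < x) :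
    chainPosAfter A n t x = insert (t, x) (chainPosAfter A n t (x - 1)) := by
  ext ⟨s, y⟩
  simp only [chainPosAfter, Set.mem_ofPred_eq, mem_chainPos, Set.mem_insert_iff,
    Prod.mk.injEq] at htx ⊢
  grind

lemma chainPosAfter_boundary (hspr : ∀ s, A s + A (s + 1) ≤ A 0) (ht : 1 ≤ t) (htn : t < n) :
    chainPosAfter A n t (A (t + 1)) =
      insert (t, A (t + 1)) (chainPosAfter A n (t + 1) (A 0 - A (t + 1))) := by
  ext ⟨s, y⟩
  simp only [chainPosAfter, Set.mem_ofPred_eq, mem_chainPos, Set.mem_insert_iff, Prod.mk.injEq]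
  have := hspr t
  grind

lemma chainPosAfter_initial : chainPosAfter A n 1 (A 0) = chainPos A n := by
  ext ⟨s, y⟩
  simp only [chainPosAfter, Set.mem_ofPred_eq, mem_chainPos]
  grind

lemma chainPosBefore_first (hA1 : A 1 = 0) (hspr : ∀ s, A s + A (s + 1) ≤ A 0) (hn : 1 ≤ n) :
    chainPosBefore A n 1 (A 0) = {(1, A 0)} := by
  ext ⟨s, y⟩
  simp only [chainPosBefore, Set.mem_ofPred_eq, mem_chainPos, Set.mem_singleton_iff, Prod.mk.injEq]
  have := hspr 1
  grind

lemma chainPosBefore_of_lt (htx : (t, x) ∈ chainPos A n) :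
    chainPosBefore A n t x = insert (t, x) (chainPosBefore A n t (x + 1)) := by
  ext ⟨s, y⟩
  simp only [chainPosBefore, Set.mem_ofPred_eq, mem_chainPos, Set.mem_insert_iff,
    Prod.mk.injEq] at htx ⊢
  grind

lemma chainPosBefore_boundary (hspr : ∀ s, A s + A (s + 1) ≤ A 0) (ht : 2 ≤ t) (htn : t ≤ n) :
    chainPosBefore A n t (A 0 - A t) =
      insert (t, A 0 - A t) (chainPosBefore A n (t - 1) (A t)) := by
  ext ⟨s, y⟩
  simp only [chainPosBefore, Set.mem_ofPred_eq, mem_chainPos, Set.mem_insert_iff, Prod.mk.injEq]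
  have := hspr t
  have := hspr (t - 1)
  grind

lemma chainPosBefore_terminal : chainPosBefore A n n 0 = chainPos A n := by
  ext ⟨s, y⟩
  simp only [chainPosBefore, Set.mem_ofPred_eq, mem_chainPos]
  grind

end Positions

section Runs

variable {A : ℕ → ℕ} {n : ℕ}

theorem lower_induction (htop : ∀ i, n < i → A i = 0) (hspr : ∀ s, A s + A (s + 1) ≤ A 0)
    {P : ℕ → ℕ → ℕ → Prop} (last : ∀ fuel, P n 0 fuel)
    (step : ∀ t x fuel, (t, x) ∈ chainPos A n → A (t + 1) < x → P t (x - 1) fuel →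
      P t x (fuel + 1))
    (boundary : ∀ t fuel, 1 ≤ t → t < n → P (t + 1) (A 0 - A (t + 1)) fuel →
      P t (A (t + 1)) fuel)
    {t x fuel : ℕ} (htx : (t, x) ∈ chainPos A n)
    (hfuel : (lowerColorSeq A n t x).length ≤ fuel) : P t x fuel := by
  induction hμ : (lowerColorSeq A n t x).length + (n - t) using Nat.strong_induction_on
    generalizing t x fuel with
  | _ μ ih =>
  obtain ⟨ht, htn, hx, hx'⟩ := mem_chainPos.1 htx
  by_cases hmove : A (t + 1) < x
  · rw [lowerColorSeq_of_lt hmove, List.length_cons] at hfuel hμ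
    obtain ⟨fuel, rfl⟩ : ∃ f, fuel = f + 1 := ⟨fuel - 1, by omega⟩
    exact step t x fuel htx hmove
      (ih _ (by omega) (mem_chainPos.2 ⟨ht, htn, by omega, by omega⟩) (by omega) rfl)
  by_cases hbd : t < n
  · obtain rfl : x = A (t + 1) := by omega
    rw [lowerColorSeq_boundary hbd] at hfuel hμ
    exact boundary t fuel ht hbd (ih _ (by omega)
      (mem_chainPos.2 ⟨by omega, hbd, by have := hspr (t + 1); omega, le_rfl⟩) hfuel rfl)
  obtain rfl : t = n := by omega
  obtain rfl : x = 0 := by have := htop (t + 1) (by omega); omega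
  exact last fuel

-- `(t - 1) * A 0 + (A 0 - x)` bounds the number of raising steps left: phase `t` has at most
-- `A 0 - x` of them and each earlier phase at most `A 0`.
theorem raise_induction (hA1 : A 1 = 0) (hspr : ∀ s, A s + A (s + 1) ≤ A 0)
    {P : ℕ → ℕ → ℕ → Prop} (first : ∀ fuel, P 1 (A 0) fuel)
    (step : ∀ t x fuel, (t, x) ∈ chainPos A n → x < A 0 - A t → P t (x + 1) fuel →
      P t x (fuel + 1))
    (boundary : ∀ t fuel, 2 ≤ t → t ≤ n → P (t - 1) (A t) fuel → P t (A 0 - A t) fuel)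
    {t x fuel : ℕ} (htx : (t, x) ∈ chainPos A n)
    (hfuel : (t - 1) * A 0 + (A 0 - x) ≤ fuel) : P t x fuel := by
  induction hμ : (t - 1) * A 0 + (A 0 - x) + t using Nat.strong_induction_on
    generalizing t x fuel with
  | _ μ ih =>
  obtain ⟨ht, htn, hx, hx'⟩ := mem_chainPos.1 htx
  by_cases hmove : x < A 0 - A t
  · obtain ⟨fuel, rfl⟩ : ∃ f, fuel = f + 1 := ⟨fuel - 1, by omega⟩
    exact step t x fuel htx hmove
      (ih _ (by omega) (mem_chainPos.2 ⟨ht, htn, by omega, by omega⟩) (by omega) rfl)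
  by_cases hbd : 2 ≤ t
  · obtain rfl : x = A 0 - A t := by omega
    have hmul : (t - 1) * A 0 = (t - 1 - 1) * A 0 + A 0 := by
      rw [← Nat.succ_mul, show (t - 1 - 1).succ = t - 1 by omega]
    have hprev := hspr (t - 1)
    rw [show t - 1 + 1 = t by omega] at hprev
    exact boundary t fuel hbd htn (ih _ (by omega)
      (mem_chainPos.2 ⟨by omega, by omega, by rw [show t - 1 + 1 = t by omega], by omega⟩)
      (by omega) rfl)
  obtain rfl : t = 1 := by omega
  obtain rfl : x = A 0 := by omega
  exact first fuel

lemma lowerColors_chainElem (hn : 1 ≤ n) (htop : ∀ i, n < i → A i = 0)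
    (hspr : ∀ s, A s + A (s + 1) ≤ A 0) {t x fuel : ℕ} (htx : (t, x) ∈ chainPos A n)
    (hfuel : (lowerColorSeq A n t x).length ≤ fuel) :
    lowerColors fuel (chainElem A n t x) (t - 1) = lowerColorSeq A n t x := by
  refine lower_induction htop hspr (P := fun t x fuel =>
    lowerColors fuel (chainElem A n t x) (t - 1) = lowerColorSeq A n t x) (fun fuel => ?_)
    (fun t x fuel htx hx ih => ?_) (fun t fuel ht htn ih => ?_) htx hfuel
  · rw [lowerColors_of_lowerMove_eq_none fuel (lowerMove_chainElem_last hn)]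
    simp [lowerColorSeq]
  · obtain ⟨ht, htn, -, hx'⟩ := mem_chainPos.1 htx
    rw [lowerColors_succ_of_lowerMove_eq_some
      (lowerMove_chainElem_of_lt ht htn htop hx (by omega)), ih, lowerColorSeq_of_lt hx,
      Nat.sub_add_cancel ht]
  · rw [Nat.add_sub_cancel] at ih
    rw [lowerColors_congr_index fuel (lowerMove_chainElem_boundary ht htn htop),
      chainElem_boundary (by have := hspr t; omega), ih, lowerColorSeq_boundary htn]

lemma getLast?_lowerList_chainElem (hn : 1 ≤ n) (htop : ∀ i, n < i → A i = 0)
    (hspr : ∀ s, A s + A (s + 1) ≤ A 0) {t x fuel : ℕ} (htx : (t, x) ∈ chainPos A n)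
    (hfuel : (lowerColorSeq A n t x).length ≤ fuel) :
    (lowerList fuel (chainElem A n t x) (t - 1)).getLast? = some (chainElem A n n 0) := by
  refine lower_induction htop hspr (P := fun t x fuel =>
    (lowerList fuel (chainElem A n t x) (t - 1)).getLast? = some (chainElem A n n 0))
    (fun fuel => ?_) (fun t x fuel htx hx ih => ?_) (fun t fuel ht htn ih => ?_) htx hfuel
  · rw [lowerList_of_lowerMove_eq_none fuel (lowerMove_chainElem_last hn), List.getLast?_singleton]
  · obtain ⟨ht, htn, -, hx'⟩ := mem_chainPos.1 htx
    rw [lowerList_succ_of_lowerMove_eq_some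
      (lowerMove_chainElem_of_lt ht htn htop hx (by omega)), List.getLast?_cons, ih]
    rfl
  · rw [Nat.add_sub_cancel] at ih
    rw [lowerList_congr_index fuel (lowerMove_chainElem_boundary ht htn htop),
      chainElem_boundary (by have := hspr t; omega), ih]

lemma setOf_mem_lowerList_chainElem (hn : 1 ≤ n) (htop : ∀ i, n < i → A i = 0)
    (hspr : ∀ s, A s + A (s + 1) ≤ A 0) {t x fuel : ℕ} (htx : (t, x) ∈ chainPos A n)
    (hfuel : (lowerColorSeq A n t x).length ≤ fuel) :
    {z | z ∈ lowerList fuel (chainElem A n t x) (t - 1)} =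
      Function.uncurry (chainElem A n) '' chainPosAfter A n t x := by
  refine lower_induction htop hspr (P := fun t x fuel =>
    {z | z ∈ lowerList fuel (chainElem A n t x) (t - 1)} =
      Function.uncurry (chainElem A n) '' chainPosAfter A n t x)
    (fun fuel => ?_) (fun t x fuel htx hx ih => ?_) (fun t fuel ht htn ih => ?_) htx hfuel
  · rw [lowerList_of_lowerMove_eq_none fuel (lowerMove_chainElem_last hn),
      chainPosAfter_last htop hspr hn, Set.image_singleton]
    ext; simp
  · obtain ⟨ht, htn, -, hx'⟩ := mem_chainPos.1 htx
    rw [lowerList_succ_of_lowerMove_eq_some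
      (lowerMove_chainElem_of_lt ht htn htop hx (by omega)), chainPosAfter_of_lt htx (by omega),
      Set.image_insert_eq, ← ih]
    ext; simp
  · rw [Nat.add_sub_cancel] at ih
    have hA : A (t + 1) ≤ A 0 := by have := hspr t; omega
    have hpos : (t + 1, A 0 - A (t + 1)) ∈ chainPosAfter A n (t + 1) (A 0 - A (t + 1)) :=
      ⟨mem_chainPos.2 ⟨by omega, htn, by have := hspr (t + 1); omega, le_rfl⟩, .inr ⟨rfl, le_rfl⟩⟩
    have hmem : chainElem A n (t + 1) (A 0 - A (t + 1)) ∈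
        Function.uncurry (chainElem A n) '' chainPosAfter A n (t + 1) (A 0 - A (t + 1)) :=
      Set.mem_image_of_mem _ hpos
    rw [lowerList_congr_index fuel (lowerMove_chainElem_boundary ht htn htop),
      chainPosAfter_boundary hspr ht htn, Set.image_insert_eq, Function.uncurry_apply_pair,
      chainElem_boundary hA, Set.insert_eq_of_mem hmem, ih]

lemma setOf_mem_raiseList_chainElem (hn : 1 ≤ n) (hA1 : A 1 = 0)
    (hspr : ∀ s, A s + A (s + 1) ≤ A 0) {t x fuel : ℕ} (htx : (t, x) ∈ chainPos A n)
    (hfuel : (t - 1) * A 0 + (A 0 - x) ≤ fuel) :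
    {z | z ∈ raiseList fuel (chainElem A n t x) (t - 1)} =
      Function.uncurry (chainElem A n) '' chainPosBefore A n t x := by
  refine raise_induction hA1 hspr (P := fun t x fuel =>
    {z | z ∈ raiseList fuel (chainElem A n t x) (t - 1)} =
      Function.uncurry (chainElem A n) '' chainPosBefore A n t x)
    (fun fuel => ?_) (fun t x fuel htx hx ih => ?_) (fun t fuel ht htn ih => ?_) htx hfuel
  · rw [raiseList_of_raiseMove_eq_none fuel (raiseMove_chainElem_first hn),
      chainPosBefore_first hA1 hspr hn, Set.image_singleton]
    ext; simp
  · obtain ⟨ht, htn, -, -⟩ := mem_chainPos.1 htx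
    rw [raiseList_succ_of_raiseMove_eq_some (raiseMove_chainElem_of_lt ht htn hx),
      chainPosBefore_of_lt htx, Set.image_insert_eq, ← ih]
    ext; simp
  · obtain ⟨u, rfl⟩ : ∃ u, t = u + 2 := ⟨t - 2, by omega⟩
    have hA : A (u + 1) + A (u + 2) ≤ A 0 := hspr (u + 1)
    have hbd : chainElem A n (u + 2) (A 0 - A (u + 2)) = chainElem A n (u + 1) (A (u + 2)) :=
      (chainElem_boundary (t := u + 1) (le_add_self.trans hA)).symm
    have hpos : (u + 1, A (u + 2)) ∈ chainPosBefore A n (u + 1) (A (u + 2)) :=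
      ⟨mem_chainPos.2 ⟨by omega, by omega, le_rfl, by omega⟩, .inr ⟨rfl, le_rfl⟩⟩
    have hmem : chainElem A n (u + 1) (A (u + 2)) ∈
        Function.uncurry (chainElem A n) '' chainPosBefore A n (u + 1) (A (u + 2)) :=
      Set.mem_image_of_mem _ hpos
    rw [raiseList_congr_index fuel (raiseMove_chainElem_boundary ht htn (by omega)),
      chainPosBefore_boundary hspr ht htn, Set.image_insert_eq, Function.uncurry_apply_pair, hbd]
    simp only [show u + 2 - 1 = u + 1 by omega, Nat.add_sub_cancel] at ih ⊢
    rw [Set.insert_eq_of_mem hmem, ← ih]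

end Runs

section Transversal

variable {A : ℕ → ℕ} {n : ℕ}

lemma Tset_chainElem_initial (hn : 1 ≤ n) (hA1 : A 1 = 0) (htop : ∀ i, n < i → A i = 0)
    (hspr : ∀ s, A s + A (s + 1) ≤ A 0) :
    Tset (chainElem A n 1 (A 0)) 0 = Function.uncurry (chainElem A n) '' chainPos A n := by
  have hpos : (1, A 0) ∈ chainPos A n :=
    mem_chainPos.2 ⟨le_rfl, hn, by have := hspr 1; omega, by omega⟩
  have hsum : A 0 ≤ (chainElem A n 1 (A 0)).sum := by
    have := getD_le_sum (chainElem A n 1 (A 0)) (1 - 1)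
    rwa [getD_chainElem_sub_one le_rfl hn] at this
  have hfuel : (lowerColorSeq A n 1 (A 0)).length ≤
      (chainElem A n 1 (A 0)).length * (chainElem A n 1 (A 0)).sum :=
    calc _ ≤ n * A 0 := length_lowerColorSeq_initial_le hn hA1
      _ ≤ _ := Nat.mul_le_mul (by simp) hsum
  have hlow := setOf_mem_lowerList_chainElem hn htop hspr hpos hfuel
  rw [chainPosAfter_initial] at hlow
  rw [Tset, Set.ofPred_or, raiseList_of_raiseMove_eq_none _ (raiseMove_chainElem_first hn), hlow]
  refine Set.union_eq_right.2 fun z hz => ?_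
  rw [Set.mem_ofPred_eq, List.mem_singleton] at hz
  exact hz ▸ Set.mem_image_of_mem _ hpos

lemma Tset_chainElem_terminal (hn : 1 ≤ n) (hA1 : A 1 = 0) (htop : ∀ i, n < i → A i = 0)
    (hspr : ∀ s, A s + A (s + 1) ≤ A 0) :
    Tset (chainElem A n n 0) (n - 1) = Function.uncurry (chainElem A n) '' chainPos A n := by
  have hpos : (n, 0) ∈ chainPos A n :=
    mem_chainPos.2 ⟨hn, le_rfl, (htop _ (by omega)).le, Nat.zero_le _⟩
  have hfuel : (n - 1) * A 0 + (A 0 - 0) ≤ rkL (chainElem A n n 0) := by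
    have := mul_getD_le_rkL (chainElem A n n 0) n
    rw [getD_chainElem_self le_rfl, Nat.sub_zero] at this
    calc _ = n * A 0 := by
          rw [Nat.sub_zero, ← Nat.succ_mul, Nat.succ_eq_add_one, Nat.sub_add_cancel hn]
      _ ≤ _ := this
  have hraise := setOf_mem_raiseList_chainElem hn hA1 hspr hpos hfuel
  rw [chainPosBefore_terminal] at hraise
  rw [Tset, Set.ofPred_or, hraise, lowerList_of_lowerMove_eq_none _ (lowerMove_chainElem_last hn)]
  refine Set.union_eq_left.2 fun z hz => ?_
  rw [Set.mem_ofPred_eq, List.mem_singleton] at hz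
  exact hz ▸ Set.mem_image_of_mem _ hpos

end Transversal

end OHara

open OHara in
theorem transversal_chain_of_initial_general (n : ℕ) (hn : 1 ≤ n)
    (a : List ℕ) (hlen : a.length = n + 1)
    (h1 : a.getD 1 0 = 0) (h0 : a.getD 0 0 = sprL a) :
    lowerColors (a.length * a.sum) a 0 =
      (List.range n).flatMap (fun t =>
        List.replicate (a.getD 0 0 - a.getD (t + 1) 0 - a.getD (t + 2) 0) (t + 1)) ∧
    (lowerColors (a.length * a.sum) a 0).Chain' (· ≤ ·) ∧
    (lowerList (a.length * a.sum) a 0).getLast? = some (a.drop 2 ++ [0, a.getD 0 0]) ∧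
    Tset a 0 = Tset (a.drop 2 ++ [0, a.getD 0 0]) (n - 1) := by
  set A : ℕ → ℕ := fun i => a.getD i 0
  have hA1 : A 1 = 0 := h1
  have htop : ∀ i, n < i → A i = 0 := fun i hi => List.getD_eq_default _ _ (by omega)
  have hspr : ∀ s, A s + A (s + 1) ≤ A 0 := getD_add_getD_succ_le_of_eq_sprL (by omega) h0
  have ha : a = chainElem A n 1 (A 0) := eq_chainElem_initial hlen h1
  have hb : a.drop 2 ++ [0, a.getD 0 0] = chainElem A n n 0 := drop_two_append_eq_chainElem hlen hn
  have hpos : (1, A 0) ∈ chainPos A n :=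
    mem_chainPos.2 ⟨le_rfl, hn, by have := hspr 1; omega, by omega⟩
  have hfuel : (lowerColorSeq A n 1 (A 0)).length ≤ a.length * a.sum :=
    (length_lowerColorSeq_initial_le hn hA1).trans (Nat.mul_le_mul (by omega) (getD_le_sum a 0))
  have hcolors := lowerColors_chainElem hn htop hspr hpos hfuel
  rw [← ha, lowerColorSeq_initial hn hA1] at hcolors
  refine ⟨hcolors, hcolors ▸ isChain_flatMap_range_replicate _ _, ?_, ?_⟩
  · have := getLast?_lowerList_chainElem hn htop hspr hpos hfuel
    rwa [← ha, ← hb] at this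
  · rw [hb, Tset_chainElem_terminal hn hA1 htop hspr]
    nth_rw 1 [ha]
    exact Tset_chainElem_initial hn hA1 htop hspr

open OHara in
/-- For an initial element `𝔞 = (a_0, 0, a_2, …, a_n)`: (i) the color sequence of
`T_0(𝔞)` (read from lowest rank to highest rank, i.e. along the lowering algorithm) is
`(1^{a_0-a_2}, 2^{a_0-a_2-a_3}, …, j^{a_0-a_j-a_{j+1}}, …, n^{a_0-a_n})`, and in particular
is nondecreasing; (ii) the terminal element of `T_0(𝔞)` is `𝔟 = (a_2, …, a_n, 0, a_0)`;
(iii) `T_0(𝔞) = T_{n-1}(𝔟)`. -/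
theorem transversal_chain_of_initial (n m : ℕ) (hn : 1 ≤ n) (hm : 1 ≤ m)
    (a : List ℕ) (hlen : a.length = n + 1) (hsum : a.sum = m)
    (h1 : a.getD 1 0 = 0) (h0 : a.getD 0 0 = sprL a) :
    lowerColors (a.length * a.sum) a 0 =
      (List.range n).flatMap (fun t =>
        List.replicate (a.getD 0 0 - a.getD (t + 1) 0 - a.getD (t + 2) 0) (t + 1)) ∧
    (lowerColors (a.length * a.sum) a 0).Chain' (· ≤ ·) ∧
    (lowerList (a.length * a.sum) a 0).getLast? = some (a.drop 2 ++ [0, a.getD 0 0]) ∧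
    Tset a 0 = Tset (a.drop 2 ++ [0, a.getD 0 0]) (n - 1) :=
  transversal_chain_of_initial_general n hn a hlen h1 h0
end
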